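/- Let q ∈ ℂ with 0 < |q| ≤ 0.31 and x ∈ ℂ with |x| ≤ 8.842. Then the partial derivatives θ_x(q,x) and θ_q(q,x) of θ(q,x) = ∑_{j=0}^∞ q^{j(j+1)/2} x^j do not both vanish. -/

import Mathlib

/-!
With `t n = n(n+1)/2`, the Euler operators act on `θ(q,x) = ∑ qᵗⁿ xⁿ` by
`q θ_q = ∑ t n qᵗⁿ xⁿ` and `x θ_x = ∑ n qᵗⁿ xⁿ`, so `q θ_q - x θ_x = ∑ C(n,2) qᵗⁿ xⁿ`. The terms
`n = 0, 1` vanish and the rest factor as `q³x² ψ(q,x)` with `ψ(q,x) = ∑ C(k+2,2) q^{k(k+5)/2} xᵏ`.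
The constant term of `ψ` is `1`, and its other terms are dominated by the geometric series
`∑ 3|q|³|x| (2|q|⁴|x|)ᵏ`, whose sum is `< 1` for `|q| ≤ 0.31`, `|x| ≤ 8.842`; so `ψ ≠ 0`.
A common zero of `θ_x` and `θ_q` would therefore have `x = 0`, but `θ_x(q,0) = q ≠ 0`.
-/

open Complex

noncomputable def theta (q x : ℂ) : ℂ := ∑' j : ℕ, q ^ (j * (j + 1) / 2) * x ^ j

open Filter Topology

lemma triangle_succ (n : ℕ) : (n + 1) * (n + 1 + 1) / 2 = n * (n + 1) / 2 + (n + 1) := by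
  rw [show (n + 1) * (n + 1 + 1) = n * (n + 1) + (n + 1) * 2 by ring,
    Nat.add_mul_div_right _ _ two_pos]

lemma triangle_add_two (k : ℕ) : (k + 2) * (k + 2 + 1) / 2 = k * (k + 5) / 2 + 3 := by
  rw [show (k + 2) * (k + 2 + 1) = k * (k + 5) + 3 * 2 by ring,
    Nat.add_mul_div_right _ _ two_pos]

lemma triangle_eq_choose_two_add (n : ℕ) : n * (n + 1) / 2 = n.choose 2 + n := by
  have h := Nat.choose_two_right (n + 1)
  rw [Nat.add_sub_cancel, mul_comm] at h
  rw [← h, Nat.choose_succ_succ', Nat.choose_one_right, add_comm]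

lemma triangle_le_sq (n : ℕ) : ((n * (n + 1) / 2 : ℕ) : ℝ) ≤ ((n : ℝ) + 1) ^ 2 := by
  have h : n * (n + 1) / 2 ≤ (n + 1) ^ 2 := (Nat.div_le_self _ _).trans (by nlinarith)
  exact_mod_cast h

lemma choose_two_le_three_mul_two_pow (k : ℕ) : (k + 3).choose 2 ≤ 3 * 2 ^ k := by
  have h : (k + 3) * (k + 2) ≤ 2 * (3 * 2 ^ k) := by
    induction k with
    | zero => norm_num
    | succ k ih => rw [pow_succ]; nlinarith
  rw [Nat.choose_two_right, show k + 3 - 1 = k + 2 by omega]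
  exact Nat.div_le_of_le_mul h

lemma three_add_four_mul_le (k : ℕ) : 3 + 4 * k ≤ (k + 1) * (k + 1 + 5) / 2 := by
  rw [Nat.le_div_iff_mul_le two_pos]
  nlinarith [Nat.le_mul_self k]

lemma mul_natCast_mul_pow_sub_one {R : Type*} [CommSemiring R] (a : R) (n : ℕ) :
    a * (n * a ^ (n - 1)) = n * a ^ n := by
  cases n with
  | zero => simp
  | succ n => rw [Nat.add_sub_cancel, pow_succ]; ring

lemma summable_sq_mul_pow_triangle_mul_pow {a b : ℝ} (ha₀ : 0 ≤ a) (ha : a < 1) (hb : 0 ≤ b) :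
    Summable fun n : ℕ => ((n : ℝ) + 1) ^ 2 * a ^ (n * (n + 1) / 2) * b ^ n := by
  refine summable_of_ratio_norm_eventually_le (r := 1 / 2) (by norm_num) ?_
  have hsmall : ∀ᶠ n : ℕ in atTop, a ^ (n + 1) * b < 1 / 8 := by
    have : Tendsto (fun n : ℕ => a ^ (n + 1) * b) atTop (𝓝 0) := by
      simpa using ((tendsto_pow_atTop_nhds_zero_of_lt_one ha₀ ha).comp
        (tendsto_add_atTop_nat 1)).mul_const b
    exact this.eventually (gt_mem_nhds (by norm_num))
  filter_upwards [hsmall] with n hn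
  rw [Real.norm_of_nonneg (by positivity), Real.norm_of_nonneg (by positivity), triangle_succ]
  have hsq : ((n : ℝ) + 1 + 1) ^ 2 ≤ 4 * ((n : ℝ) + 1) ^ 2 := by nlinarith [n.cast_nonneg (α := ℝ)]
  calc ((↑(n + 1) : ℝ) + 1) ^ 2 * a ^ (n * (n + 1) / 2 + (n + 1)) * b ^ (n + 1)
      = ((n : ℝ) + 1 + 1) ^ 2 * (a ^ (n + 1) * b) * (a ^ (n * (n + 1) / 2) * b ^ n) := by
        push_cast; ring
    _ ≤ 4 * ((n : ℝ) + 1) ^ 2 * (1 / 8) * (a ^ (n * (n + 1) / 2) * b ^ n) := by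
        gcongr
    _ = 1 / 2 * (((n : ℝ) + 1) ^ 2 * a ^ (n * (n + 1) / 2) * b ^ n) := by ring

lemma summable_mul_pow_triangle_mul_pow {a b : ℝ} (ha₀ : 0 ≤ a) (ha : a < 1) (hb : 0 ≤ b)
    {c : ℕ → ℝ} (hc₀ : ∀ n, 0 ≤ c n) (hc : ∀ n, c n ≤ ((n : ℝ) + 1) ^ 2) :
    Summable fun n : ℕ => c n * a ^ (n * (n + 1) / 2) * b ^ n :=
  (summable_sq_mul_pow_triangle_mul_pow ha₀ ha hb).of_nonneg_of_le
    (fun n => by have := hc₀ n; positivity) (fun n => by gcongr; exact hc n)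

lemma summable_natCast_mul_pow_triangle_mul_pow {q : ℂ} (hq : ‖q‖ < 1) (x : ℂ) {c : ℕ → ℕ}
    (hc : ∀ n, (c n : ℝ) ≤ ((n : ℝ) + 1) ^ 2) :
    Summable fun n : ℕ => (c n : ℂ) * q ^ (n * (n + 1) / 2) * x ^ n :=
  .of_norm <| (summable_mul_pow_triangle_mul_pow (norm_nonneg q) hq (norm_nonneg x)
    (fun n => Nat.cast_nonneg _) hc).congr fun n => by simp [norm_pow]

lemma summable_pow_triangle_mul_pow {q : ℂ} (hq : ‖q‖ < 1) (x : ℂ) :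
    Summable fun n : ℕ => q ^ (n * (n + 1) / 2) * x ^ n := by
  simpa using summable_natCast_mul_pow_triangle_mul_pow hq x (c := fun _ => 1)
    (fun n => by push_cast; nlinarith [n.cast_nonneg (α := ℝ)])

theorem hasDerivAt_tsum_mul_pow {𝕜 : Type*} [RCLike 𝕜] {a : ℕ → 𝕜}
    {e : ℕ → ℕ} {R : ℝ} {z : 𝕜} (hz : ‖z‖ < R)
    (hu : Summable fun n => ‖a n‖ * e n * R ^ e n) (hz₀ : Summable fun n => a n * z ^ e n) :
    HasDerivAt (fun w => ∑' n, a n * w ^ e n) (∑' n, a n * (e n * z ^ (e n - 1))) z := by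
  have hR : R ≠ 0 := ((norm_nonneg z).trans_lt hz).ne'
  have hzR : z ∈ Metric.ball 0 R := mem_ball_zero_iff.2 hz
  refine hasDerivAt_tsum_of_isPreconnected (hu.mul_left R⁻¹) Metric.isOpen_ball
    (convex_ball 0 R).isPreconnected (fun n y _ => (hasDerivAt_pow (e n) y).const_mul (a n))
    (fun n y hy => ?_) hzR hz₀ hzR
  rw [mem_ball_zero_iff] at hy
  calc ‖a n * (e n * y ^ (e n - 1))‖ = ‖a n‖ * (e n * ‖y‖ ^ (e n - 1)) := by simp [norm_pow]
    _ ≤ ‖a n‖ * (e n * R ^ (e n - 1)) := by gcongr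
    _ = R⁻¹ * (‖a n‖ * e n * R ^ e n) := by
        rw [mul_assoc _ (e n : ℝ), ← mul_natCast_mul_pow_sub_one R (e n)]; field_simp

theorem hasDerivAt_theta_x {q : ℂ} (hq : ‖q‖ < 1) (x : ℂ) :
    HasDerivAt (theta q) (∑' n : ℕ, q ^ (n * (n + 1) / 2) * (n * x ^ (n - 1))) x :=
  hasDerivAt_tsum_mul_pow (e := id) (lt_add_one ‖x‖)
    ((summable_mul_pow_triangle_mul_pow (b := ‖x‖ + 1) (c := fun n => n) (norm_nonneg q) hq
      (by positivity) (fun n => n.cast_nonneg) (fun n => by nlinarith)).congr fun n => by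
        simp only [id, norm_pow]; ring)
    (summable_pow_triangle_mul_pow hq x)

theorem hasDerivAt_theta_q {q : ℂ} (hq : ‖q‖ < 1) (x : ℂ) :
    HasDerivAt (fun q' => theta q' x)
      (∑' n : ℕ, x ^ n * ((n * (n + 1) / 2 : ℕ) * q ^ (n * (n + 1) / 2 - 1))) q := by
  have hρ : ‖q‖ < (‖q‖ + 1) / 2 := by linarith
  have hρ₁ : (‖q‖ + 1) / 2 < 1 := by linarith
  have hcomm : (fun q' => theta q' x) = fun q' => ∑' n : ℕ, x ^ n * q' ^ (n * (n + 1) / 2) :=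
    funext fun q' => tsum_congr fun n => mul_comm _ _
  rw [hcomm]
  exact hasDerivAt_tsum_mul_pow hρ
    ((summable_mul_pow_triangle_mul_pow (by positivity) hρ₁ (norm_nonneg x)
      (fun n => Nat.cast_nonneg _) triangle_le_sq).congr fun n => by rw [norm_pow]; ring)
    ((summable_pow_triangle_mul_pow hq x).congr fun n => mul_comm _ _)

theorem deriv_theta_x_zero {q : ℂ} (hq : ‖q‖ < 1) : deriv (theta q) 0 = q := by
  rw [(hasDerivAt_theta_x hq 0).deriv, tsum_eq_single 1]
  · norm_num
  · intro n hn
    rcases Nat.lt_or_gt_of_ne hn with h | h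
    · simp [Nat.lt_one_iff.mp h]
    · simp [zero_pow (Nat.sub_ne_zero_of_lt h)]

/-- `ψ(q,x)`, the paper's `(θ_q/x − θ_x/q)/(q²x)`. -/
noncomputable def psi (q x : ℂ) : ℂ :=
  ∑' k : ℕ, ((k + 2).choose 2 : ℂ) * q ^ (k * (k + 5) / 2) * x ^ k

theorem mul_deriv_q_sub_mul_deriv_x {q : ℂ} (hq : ‖q‖ < 1) (x : ℂ) :
    q * deriv (fun q' => theta q' x) q - x * deriv (theta q) x = q ^ 3 * x ^ 2 * psi q x := by
  have hA := summable_natCast_mul_pow_triangle_mul_pow hq x triangle_le_sq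
  have hB := summable_natCast_mul_pow_triangle_mul_pow hq x (c := fun n => n)
    (fun n => by nlinarith)
  have hterm : ∀ n : ℕ, ((n * (n + 1) / 2 : ℕ) : ℂ) * q ^ (n * (n + 1) / 2) * x ^ n
      - n * q ^ (n * (n + 1) / 2) * x ^ n
      = ((n.choose 2 : ℕ) : ℂ) * q ^ (n * (n + 1) / 2) * x ^ n := fun n => by
    rw [triangle_eq_choose_two_add]; push_cast; ring
  calc _ = ∑' n : ℕ, ((n * (n + 1) / 2 : ℕ) : ℂ) * q ^ (n * (n + 1) / 2) * x ^ n
        - ∑' n : ℕ, (n : ℂ) * q ^ (n * (n + 1) / 2) * x ^ n := by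
        rw [(hasDerivAt_theta_q hq x).deriv, (hasDerivAt_theta_x hq x).deriv, ← tsum_mul_left,
          ← tsum_mul_left]
        congr 1 <;> exact tsum_congr fun n => by
          rw [mul_left_comm, mul_natCast_mul_pow_sub_one]; ring
    _ = ∑' n : ℕ, ((n.choose 2 : ℕ) : ℂ) * q ^ (n * (n + 1) / 2) * x ^ n := by
        rw [← hA.tsum_sub hB]; exact tsum_congr hterm
    _ = ∑' k : ℕ, (((k + 2).choose 2 : ℕ) : ℂ) * q ^ ((k + 2) * (k + 2 + 1) / 2) * x ^ (k + 2) := by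
        rw [← ((hA.sub hB).congr hterm).sum_add_tsum_nat_add 2]
        simp [Finset.sum_range_succ]
    _ = q ^ 3 * x ^ 2 * psi q x := by
        rw [psi, ← tsum_mul_left]
        exact tsum_congr fun k => by rw [triangle_add_two]; ring

lemma norm_psi_term_succ_le {q : ℂ} (hq : ‖q‖ ≤ 1) (x : ℂ) (k : ℕ) :
    ‖((k + 1 + 2).choose 2 : ℂ) * q ^ ((k + 1) * (k + 1 + 5) / 2) * x ^ (k + 1)‖
      ≤ 3 * ‖q‖ ^ 3 * ‖x‖ * (2 * ‖q‖ ^ 4 * ‖x‖) ^ k := by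
  have hc : (((k + 3).choose 2 : ℕ) : ℝ) ≤ 3 * 2 ^ k := by
    exact_mod_cast choose_two_le_three_mul_two_pow k
  have he : ‖q‖ ^ ((k + 1) * (k + 1 + 5) / 2) ≤ ‖q‖ ^ (3 + 4 * k) :=
    pow_le_pow_of_le_one (norm_nonneg q) hq (three_add_four_mul_le k)
  calc _ = (((k + 3).choose 2 : ℕ) : ℝ) * ‖q‖ ^ ((k + 1) * (k + 1 + 5) / 2) * ‖x‖ ^ (k + 1) := by
        simp [norm_pow]
    _ ≤ 3 * 2 ^ k * ‖q‖ ^ (3 + 4 * k) * ‖x‖ ^ (k + 1) := by gcongr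
    _ = 3 * ‖q‖ ^ 3 * ‖x‖ * (2 * ‖q‖ ^ 4 * ‖x‖) ^ k := by ring

theorem psi_ne_zero {q x : ℂ} (hq : ‖q‖ ≤ 1)
    (hsmall : 3 * ‖q‖ ^ 3 * ‖x‖ + 2 * ‖q‖ ^ 4 * ‖x‖ < 1) : psi q x ≠ 0 := by
  set c := 3 * ‖q‖ ^ 3 * ‖x‖
  set ρ := 2 * ‖q‖ ^ 4 * ‖x‖
  have hc : 0 ≤ c := by positivity
  have hρ : ρ < 1 := by linarith
  have hgeom : HasSum (fun k => c * ρ ^ k) (c * (1 - ρ)⁻¹) :=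
    (hasSum_geometric_of_lt_one (by positivity) hρ).mul_left c
  have htail := Summable.of_norm_bounded hgeom.summable (norm_psi_term_succ_le hq x)
  have htail_lt : ‖∑' k : ℕ, ((k + 1 + 2).choose 2 : ℂ) * q ^ ((k + 1) * (k + 1 + 5) / 2)
      * x ^ (k + 1)‖ < 1 := by
    refine (tsum_of_norm_bounded hgeom (norm_psi_term_succ_le hq x)).trans_lt ?_
    rw [← div_eq_mul_inv, div_lt_one (by linarith)]
    linarith
  have hsum := (summable_nat_add_iff (f := fun k : ℕ =>
    ((k + 2).choose 2 : ℂ) * q ^ (k * (k + 5) / 2) * x ^ k) 1).mp htail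
  intro h
  rw [psi, hsum.tsum_eq_zero_add] at h
  simp only [zero_add, Nat.choose_self, Nat.cast_one, zero_mul, Nat.zero_div, pow_zero,
    mul_one] at h
  rw [eq_neg_of_add_eq_zero_right h] at htail_lt
  norm_num at htail_lt

/-- For 0 < |q| ≤ 0.31 and |x| ≤ 8.842, θ_x and θ_q do not both vanish. -/
theorem theta_x_theta_q_not_both_zero (q x : ℂ) (hq : 0 < ‖q‖)
    (hq' : ‖q‖ ≤ 0.31) (hx : ‖x‖ ≤ 8.842) :
    ¬ (deriv (theta q) x = 0 ∧ deriv (fun q' => theta q' x) q = 0) := by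
  rintro ⟨hθx, hθq⟩
  have hq₀ : q ≠ 0 := norm_pos_iff.mp hq
  have hq₁ : ‖q‖ < 1 := hq'.trans_lt (by norm_num)
  have hsmall : 3 * ‖q‖ ^ 3 * ‖x‖ + 2 * ‖q‖ ^ 4 * ‖x‖ < 1 :=
    calc _ ≤ 3 * (0.31:ℝ) ^ 3 * 8.842 + 2 * (0.31:ℝ) ^ 4 * 8.842 := by gcongr
      _ < 1 := by norm_num
  have hidentity := mul_deriv_q_sub_mul_deriv_x hq₁ x
  rw [hθx, hθq, mul_zero, mul_zero, sub_zero, eq_comm] at hidentity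
  have hx₀ : x = 0 := by simpa [hq₀, psi_ne_zero hq₁.le hsmall] using hidentity
  subst hx₀
  exact hq₀ (deriv_theta_x_zero hq₁ ▸ hθx)
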